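/- arXiv:1908.08447 — 3 statements merged into one kernel-verified Lean document; each statement's English description precedes it below -/
import Mathlib

section
/- Let n = d·m with d, m > 1, and let c : ℤ/nℤ → ℤ be (the first row of) a circulant weighing matrix CW(n,k). Define the folded function b : ℤ/mℤ → ℤ by b(j) = ∑ c(i), the sum over the d elements i of ℤ/nℤ whose reduction modulo m equals j. Then: (1) |b(j)| ≤ d for every j ∈ ℤ/mℤ; (2) for all t ∈ ℤ/mℤ, ∑_{j ∈ ℤ/mℤ} b(j)·b(j+t) equals k if t = 0 and 0 otherwise (so b is an ICW_d(m,k)); and (3) (∑_{j ∈ ℤ/mℤ} b(j))² = k. -/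
/-- Folding a `CW(d·m, k)` modulo `m` gives an `ICW_d(m, k)`:
the folded coefficients `b j = ∑_{i ≡ j (mod m)} c i` satisfy `|b j| ≤ d`,
have the same autocorrelation (so they form an `ICW_d(m,k)`),
and their total sum squares to `k`. -/
theorem fold_CW_is_ICW (d m : ℕ) (hd : 1 < d) (hm : 1 < m)
    [NeZero d] [NeZero m] (k : ℤ)
    (c : ZMod (d * m) → ℤ)
    (hvals : ∀ i : ZMod (d * m), c i = -1 ∨ c i = 0 ∨ c i = 1)
    (hauto : ∀ t : ZMod (d * m),
      (∑ i : ZMod (d * m), c i * c (i + t)) = if t = 0 then k else 0)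
    (b : ZMod m → ℤ)
    (hb : ∀ j : ZMod m,
      b j = ∑ i : ZMod (d * m),
        if ZMod.castHom ⟨d, mul_comm d m⟩ (ZMod m) i = j then c i else 0) :
    (∀ j : ZMod m, |b j| ≤ (d : ℤ)) ∧
    (∀ t : ZMod m,
      (∑ j : ZMod m, b j * b (j + t)) = if t = 0 then k else 0) ∧
    (∑ j : ZMod m, b j) ^ 2 = k := by
  set f : ZMod (d * m) →+* ZMod m := ZMod.castHom ⟨d, mul_comm d m⟩ (ZMod m) with hfdef
  have hsurj : Function.Surjective f := by
    intro j
    obtain ⟨a, rfl⟩ := ZMod.intCast_surjective (n := m) j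
    exact ⟨(a : ZMod (d * m)), map_intCast f a⟩
  -- fibers of f all have cardinality d
  have hfib : ∀ j : ZMod m,
      (Finset.univ.filter (fun i : ZMod (d * m) => f i = j)).card = d := by
    have hcongr : ∀ j : ZMod m,
        (Finset.univ.filter (fun i : ZMod (d * m) => f i = j)).card
        = (Finset.univ.filter (fun i : ZMod (d * m) => f i = (0 : ZMod m))).card := by
      intro j
      obtain ⟨x₀, hx₀⟩ := hsurj j
      apply Finset.card_bij' (fun x _ => x - x₀) (fun x _ => x + x₀)
      · intro a ha
        simp only [Finset.mem_filter, Finset.mem_univ, true_and] at ha ⊢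
        rw [map_sub, ha, hx₀, sub_self]
      · intro a ha
        simp only [Finset.mem_filter, Finset.mem_univ, true_and] at ha ⊢
        rw [map_add, ha, hx₀, zero_add]
      · intro a _; ring
      · intro a _; ring
    have hsum : ∑ j : ZMod m,
        (Finset.univ.filter (fun i : ZMod (d * m) => f i = j)).card = d * m := by
      rw [← Finset.card_eq_sum_card_fiberwise (fun x _ => Finset.mem_univ (f x))]
      simp [ZMod.card]
    have hsum' : m * (Finset.univ.filter (fun i : ZMod (d * m) => f i = (0 : ZMod m))).card
        = d * m := by
      calc m * (Finset.univ.filter (fun i : ZMod (d * m) => f i = (0 : ZMod m))).card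
          = ∑ _j : ZMod m,
            (Finset.univ.filter (fun i : ZMod (d * m) => f i = (0 : ZMod m))).card := by
            simp [Finset.sum_const, ZMod.card, mul_comm]
        _ = ∑ j : ZMod m, (Finset.univ.filter (fun i : ZMod (d * m) => f i = j)).card :=
            Finset.sum_congr rfl (fun j _ => (hcongr j).symm)
        _ = d * m := hsum
    have h0 : (Finset.univ.filter (fun i : ZMod (d * m) => f i = (0 : ZMod m))).card = d := by
      have hm0 : 0 < m := Nat.pos_of_ne_zero (NeZero.ne m)
      apply Nat.eq_of_mul_eq_mul_left hm0
      rw [hsum']; ring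
    intro j; rw [hcongr j, h0]
  have hb' : ∀ j : ZMod m,
      b j = ∑ i ∈ Finset.univ.filter (fun i : ZMod (d * m) => f i = j), c i := by
    intro j; rw [hb j, Finset.sum_filter]
  -- Part 1
  have part1 : ∀ j : ZMod m, |b j| ≤ (d : ℤ) := by
    intro j
    rw [hb' j]
    calc |∑ i ∈ Finset.univ.filter (fun i : ZMod (d * m) => f i = j), c i|
        ≤ ∑ i ∈ Finset.univ.filter (fun i : ZMod (d * m) => f i = j), |c i| :=
          Finset.abs_sum_le_sum_abs _ _
      _ ≤ ∑ _i ∈ Finset.univ.filter (fun i : ZMod (d * m) => f i = j), (1 : ℤ) :=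
          Finset.sum_le_sum (fun i _ => by rcases hvals i with h | h | h <;> simp [h])
      _ = (d : ℤ) := by rw [Finset.sum_const, hfib]; simp
  -- Part 2
  have part2 : ∀ t : ZMod m,
      (∑ j : ZMod m, b j * b (j + t)) = if t = 0 then k else 0 := by
    intro t
    have key : (∑ j : ZMod m, b j * b (j + t))
        = ∑ s : ZMod (d * m), if f s = t then (∑ i : ZMod (d * m), c i * c (i + s)) else 0 := by
      have lhs : (∑ j : ZMod m, b j * b (j + t))
          = ∑ i : ZMod (d * m), ∑ i' : ZMod (d * m),
              if f i' = f i + t then c i * c i' else 0 := by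
        simp only [hb, Finset.sum_mul_sum]
        rw [Finset.sum_comm]
        refine Finset.sum_congr rfl (fun i _ => ?_)
        rw [Finset.sum_comm]
        refine Finset.sum_congr rfl (fun i' _ => ?_)
        rw [Finset.sum_eq_single (f i)]
        · simp
        · intro x _ hx
          have : f i ≠ x := fun h => hx h.symm
          simp [this]
        · intro h; exact absurd (Finset.mem_univ _) h
      have rhs : (∑ s : ZMod (d * m), if f s = t
            then (∑ i : ZMod (d * m), c i * c (i + s)) else 0)
          = ∑ i : ZMod (d * m), ∑ i' : ZMod (d * m),
              if f i' = f i + t then c i * c i' else 0 := by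
        have step : ∀ s : ZMod (d * m), (if f s = t
              then (∑ i : ZMod (d * m), c i * c (i + s)) else 0)
            = ∑ i : ZMod (d * m), if f s = t then c i * c (i + s) else 0 := by
          intro s
          split <;> simp
        rw [Finset.sum_congr rfl (fun s _ => step s), Finset.sum_comm]
        refine Finset.sum_congr rfl (fun i _ => ?_)
        refine Fintype.sum_equiv (Equiv.addLeft i) _ _ (fun s => ?_)
        simp only [Equiv.coe_addLeft, map_add, add_right_inj]
      rw [lhs, ← rhs]
    rw [key]
    have : (∑ s : ZMod (d * m), if f s = t
          then (∑ i : ZMod (d * m), c i * c (i + s)) else 0)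
        = ∑ s : ZMod (d * m), if s = 0 then (if f s = t then k else 0) else 0 := by
      refine Finset.sum_congr rfl (fun s _ => ?_)
      rw [hauto s]
      split <;> split <;> simp_all
    rw [this, Finset.sum_ite_eq' Finset.univ (0 : ZMod (d * m))]
    simp [eq_comm]
  -- Part 3
  have part3 : (∑ j : ZMod m, b j) ^ 2 = k := by
    have expand : (∑ j : ZMod m, b j) ^ 2
        = ∑ t : ZMod m, ∑ j : ZMod m, b j * b (j + t) := by
      rw [sq, Finset.sum_mul_sum]
      rw [show (∑ j : ZMod m, ∑ j' : ZMod m, b j * b j')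
            = ∑ j : ZMod m, ∑ t : ZMod m, b j * b (j + t) from
          Finset.sum_congr rfl (fun j _ =>
            (Fintype.sum_equiv (Equiv.addLeft j)
              (fun t => b j * b (j + t)) (fun j' => b j * b j') (fun t => rfl)).symm)]
      exact Finset.sum_comm
    rw [expand, Finset.sum_congr rfl (fun t _ => part2 t)]
    simp
  exact ⟨part1, part2, part3⟩
end

section
/- Let n be a positive integer, let b : ℤ/2nℤ → ℤ be (the first row of) a circulant weighing matrix CW(2n,k), and let c : ℤ/nℤ → ℤ be (the first row of) a circulant weighing matrix CW(n,k). Let e : ℤ/2nℤ → ℤ be the spread of c, i.e. e(2i) = c(i mod n) for i = 0,…,n-1 and e(x) = 0 for odd x (this is well defined). Suppose the supports of the four functions x ↦ b(x), x ↦ b(x-n), x ↦ e(x), x ↦ e(x-n) are pairwise disjoint. Then the function a : ℤ/2nℤ → ℤ given by a(x) = b(x) - b(x-n) + e(x) + e(x-n) takes values in {-1,0,1} and is (the first row of) a circulant weighing matrix CW(2n,4k). -/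
/-!
Write `a = b' + e'` with `b' x = b x - b (x - n)` and `e' x = e x + e (x - n)`. As `n + n = 0` in
`ZMod (2 * n)`, `b'` is antiperiodic and `e'` periodic with period `n`, so the cross-correlations
of `b'` and `e'` vanish and the autocorrelation of `a` is
`2 A_b t - A_b (t - n) - A_b (t + n) + 2 A_e t + A_e (t - n) + A_e (t + n)`.
The spread `e` is the extension by zero of `c` along the injective homomorphism `i ↦ 2 i`, hence
has the same autocorrelation `k δ₀` as `b`, and the sum collapses to `4 k δ₀`. The values of `a`
lie in `{-1, 0, 1}` because at each point at most one of its four summands is nonzero.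
-/

open Finset Function

section Autocorrelation

variable {G H R : Type*} [AddCommGroup G] [Fintype G] [AddCommGroup H] [Fintype H] [CommRing R]

def autocorr (f : G → R) (t : G) : R := ∑ x, f x * f (x + t)

theorem Function.Antiperiodic.sum_eq_zero [IsAddTorsionFree R] {f : G → R} {N : G}
    (hf : Antiperiodic f N) : ∑ x, f x = 0 := by
  rw [← self_eq_neg, ← sum_neg_distrib]
  calc ∑ x, f x = ∑ x, f (x + N) := (Equiv.sum_comp (Equiv.addRight N) f).symm
    _ = ∑ x, -f x := sum_congr rfl fun x _ => hf x

theorem autocorr_add_of_antiperiodic_of_periodic [IsAddTorsionFree R] {f g : G → R} {N : G}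
    (hf : Antiperiodic f N) (hg : Periodic g N) (t : G) :
    autocorr (f + g) t = autocorr f t + autocorr g t := by
  have hfg : ∑ x, f x * g (x + t) = 0 :=
    Antiperiodic.sum_eq_zero fun x => by rw [add_right_comm, hf, hg, neg_mul]
  have hgf : ∑ x, g x * f (x + t) = 0 :=
    Antiperiodic.sum_eq_zero fun x => by rw [add_right_comm, hf, hg, mul_neg]
  simp only [autocorr, Pi.add_apply, add_mul, mul_add, sum_add_distrib, hfg, hgf]
  ring

theorem sum_sub_mul_add_sub (f : G → R) (s u v : G) :
    ∑ x, f (x - s) * f (x + u - v) = autocorr f (u + s - v) := by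
  rw [autocorr, ← Equiv.sum_comp (Equiv.subRight s) fun y => f y * f (y + (u + s - v))]
  exact sum_congr rfl fun x _ => by simp only [Equiv.subRight_apply]; congr 2; abel

theorem autocorr_add_mul_translate (f : G → R) (ε : R) (s t : G) :
    autocorr (fun x => f x + ε * f (x - s)) t =
      (1 + ε ^ 2) * autocorr f t + ε * (autocorr f (t - s) + autocorr f (t + s)) := by
  have h₀ : ∑ x, f x * f (x + t) = autocorr f t := rfl
  have h₁ : ∑ x, f x * f (x + t - s) = autocorr f (t - s) := by
    simpa using sum_sub_mul_add_sub f 0 t s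
  have h₂ : ∑ x, f (x - s) * f (x + t) = autocorr f (t + s) := by
    simpa using sum_sub_mul_add_sub f s t 0
  have h₃ : ∑ x, f (x - s) * f (x + t - s) = autocorr f t := by
    simpa using sum_sub_mul_add_sub f s t s
  rw [autocorr]
  simp only [mul_add, add_mul, sum_add_distrib, mul_assoc, mul_left_comm _ ε, ← mul_sum,
    h₀, h₁, h₂, h₃]
  ring

theorem autocorr_sub_translate (f : G → R) (s t : G) :
    autocorr (fun x => f x - f (x - s)) t =
      2 * autocorr f t - autocorr f (t - s) - autocorr f (t + s) := by
  have := autocorr_add_mul_translate f (-1) s t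
  simp only [neg_one_mul, ← sub_eq_add_neg] at this
  rw [this]
  ring

theorem autocorr_add_translate (f : G → R) (s t : G) :
    autocorr (fun x => f x + f (x - s)) t =
      2 * autocorr f t + autocorr f (t - s) + autocorr f (t + s) := by
  have := autocorr_add_mul_translate f 1 s t
  simp only [one_mul] at this
  rw [this]
  ring

theorem autocorr_doubling [IsAddTorsionFree R] {b e : G → R} {N : G} (hN : N + N = 0)
    (hbe : autocorr b = autocorr e) (t : G) :
    autocorr (fun x => b x - b (x - N) + e x + e (x - N)) t = 4 * autocorr b t := by
  have hN' : ∀ x : G, x + N = x - N := fun x =>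
    eq_sub_of_add_eq (by rw [add_assoc, hN, add_zero])
  have hanti : Antiperiodic (fun x => b x - b (x - N)) N := fun x => by
    dsimp only
    rw [add_sub_cancel_right, hN', neg_sub]
  have hper : Periodic (fun x => e x + e (x - N)) N := fun x => by
    dsimp only
    rw [add_sub_cancel_right, hN', add_comm]
  have hsplit : (fun x => b x - b (x - N) + e x + e (x - N)) =
      (fun x => b x - b (x - N)) + fun x => e x + e (x - N) :=
    funext fun x => add_assoc _ _ _
  rw [hsplit, autocorr_add_of_antiperiodic_of_periodic hanti hper, autocorr_sub_translate,
    autocorr_add_translate, hbe]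
  ring

theorem autocorr_extend_zero [DecidableEq G] [DecidableEq H] (ι : H →+ G) (hι : Injective ι)
    {c : H → R} {k : R} (hc : ∀ s, autocorr c s = if s = 0 then k else 0) (u : G) :
    autocorr (extend ι c 0) u = if u = 0 then k else 0 := by
  have hsum : autocorr (extend ι c 0) u = ∑ h, c h * extend ι c 0 (ι h + u) :=
    (Fintype.sum_of_injective ι hι _ _
      (fun x hx => by rw [extend_apply' _ _ _ hx, Pi.zero_apply, zero_mul])
      (fun h => by rw [hι.extend_apply])).symm
  by_cases hu : u ∈ Set.range ι
  · obtain ⟨s, rfl⟩ := hu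
    simp only [hsum, ← map_add, hι.extend_apply, map_eq_zero_iff ι hι]
    exact hc s
  · have hoff : ∀ h, ι h + u ∉ Set.range ι := by
      rintro h ⟨h', hh'⟩
      exact hu ⟨h' - h, by rw [map_sub, hh', add_sub_cancel_left]⟩
    have hu0 : u ≠ 0 := fun hu0 => hu ⟨0, by rw [map_zero, hu0]⟩
    simp only [hsum, extend_apply' _ _ _ (hoff _), Pi.zero_apply, mul_zero, sum_const_zero,
      if_neg hu0]

end Autocorrelation

section Spread

def doublingHom (n : ℕ) [NeZero n] : ZMod n →+ ZMod (2 * n) where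
  toFun i := ((2 * i.val : ℕ) : ZMod (2 * n))
  map_zero' := by simp
  map_add' a b := by
    rw [← Nat.cast_add, ZMod.natCast_eq_natCast_iff', ZMod.val_add, ← mul_add,
      Nat.mul_mod_mul_left, Nat.mul_mod_mul_left, Nat.mod_mod]

variable {n : ℕ} [NeZero n]

theorem val_doublingHom (i : ZMod n) : (doublingHom n i).val = 2 * i.val := by
  have := i.val_lt
  exact ZMod.val_natCast_of_lt (by omega)

theorem doublingHom_injective : Injective (doublingHom n) := fun i j hij => by
  have := congrArg ZMod.val hij
  rw [val_doublingHom, val_doublingHom] at this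
  exact ZMod.val_injective n (by omega)

theorem doublingHom_half {x : ZMod (2 * n)} (hx : x.val % 2 = 0) :
    doublingHom n ((x.val / 2 : ℕ) : ZMod n) = x := by
  apply ZMod.val_injective
  have := x.val_lt
  rw [val_doublingHom, ZMod.val_natCast_of_lt (by omega)]
  omega

theorem spread_eq_extend {R : Type*} [Zero R] {c : ZMod n → R} {e : ZMod (2 * n) → R}
    (he : ∀ x : ZMod (2 * n), e x = if x.val % 2 = 0 then c ((x.val / 2 : ℕ) : ZMod n) else 0) :
    e = extend (doublingHom n) c 0 := by
  funext x
  rw [he x]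
  split_ifs with hx
  · rw [← doublingHom_injective.extend_apply c 0, doublingHom_half hx]
  · have hx' : ¬∃ i, doublingHom n i = x := by
      rintro ⟨i, rfl⟩
      rw [val_doublingHom] at hx
      omega
    rw [extend_apply' _ _ _ hx', Pi.zero_apply]

end Spread

/-- If `b` is a `CW(2n,k)`, `c` is a `CW(n,k)`, `e` is the "spread" of `c`
(`e(2i) = c(i)`, `e` vanishing on odd residues), and the supports of
`b(x)`, `b(x-n)`, `e(x)`, `e(x-n)` are pairwise disjoint, then
`a(x) = b(x) - b(x-n) + e(x) + e(x-n)` is a `CW(2n, 4k)`.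
In group-ring notation: `(1 - X^n)·B(X) + (1 + X^n)·C(X²)` is a `CW(2n,4k)`. -/
theorem cw_doubling (n : ℕ) [NeZero n] (k : ℤ)
    (b : ZMod (2 * n) → ℤ) (c : ZMod n → ℤ)
    (hbvals : ∀ x : ZMod (2 * n), b x = -1 ∨ b x = 0 ∨ b x = 1)
    (hbauto : ∀ t : ZMod (2 * n),
      (∑ x : ZMod (2 * n), b x * b (x + t)) = if t = 0 then k else 0)
    (hcvals : ∀ x : ZMod n, c x = -1 ∨ c x = 0 ∨ c x = 1)
    (hcauto : ∀ t : ZMod n,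
      (∑ x : ZMod n, c x * c (x + t)) = if t = 0 then k else 0)
    (e : ZMod (2 * n) → ℤ)
    (he : ∀ x : ZMod (2 * n),
      e x = if x.val % 2 = 0 then c ((x.val / 2 : ℕ) : ZMod n) else 0)
    (hdisj : ∀ x : ZMod (2 * n),
      (b x = 0 ∨ b (x - (n : ZMod (2 * n))) = 0) ∧
      (b x = 0 ∨ e x = 0) ∧
      (b x = 0 ∨ e (x - (n : ZMod (2 * n))) = 0) ∧
      (b (x - (n : ZMod (2 * n))) = 0 ∨ e x = 0) ∧
      (b (x - (n : ZMod (2 * n))) = 0 ∨ e (x - (n : ZMod (2 * n))) = 0) ∧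
      (e x = 0 ∨ e (x - (n : ZMod (2 * n))) = 0)) :
    (∀ x : ZMod (2 * n),
      b x - b (x - (n : ZMod (2 * n))) + e x + e (x - (n : ZMod (2 * n))) = -1 ∨
      b x - b (x - (n : ZMod (2 * n))) + e x + e (x - (n : ZMod (2 * n))) = 0 ∨
      b x - b (x - (n : ZMod (2 * n))) + e x + e (x - (n : ZMod (2 * n))) = 1) ∧
    (∀ t : ZMod (2 * n),
      (∑ x : ZMod (2 * n),
        (b x - b (x - (n : ZMod (2 * n))) + e x + e (x - (n : ZMod (2 * n)))) *
        (b (x + t) - b (x + t - (n : ZMod (2 * n))) + e (x + t) +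
          e (x + t - (n : ZMod (2 * n))))) = if t = 0 then 4 * k else 0) := by
  have hN : (n : ZMod (2 * n)) + n = 0 := by
    rw [← two_mul]
    exact_mod_cast ZMod.natCast_self (2 * n)
  have heauto : ∀ t, autocorr e t = if t = 0 then k else 0 := by
    rw [spread_eq_extend he]
    exact autocorr_extend_zero (doublingHom n) doublingHom_injective hcauto
  have hevals : ∀ x, e x = -1 ∨ e x = 0 ∨ e x = 1 := fun x => by
    rw [he x]
    split_ifs
    exacts [hcvals _, Or.inr (Or.inl rfl)]
  refine ⟨fun x => ?_, fun t => ?_⟩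
  · have := hdisj x
    have := hbvals x
    have := hbvals (x - n)
    have := hevals x
    have := hevals (x - n)
    omega
  · have hbe : autocorr b = autocorr e := funext fun t => (hbauto t).trans (heauto t).symm
    calc _ = 4 * autocorr b t := autocorr_doubling hN hbe t
      _ = _ := by rw [autocorr, hbauto, mul_ite, mul_zero]
end

section
/- For every integer m ≥ 2, the function A : ℤ/14mℤ → ℤ whose group-ring representation is A(X) = (1 - X^{7m})·C(X^{2m}) + (1 + X^{7m})·X·C(X^m) modulo X^{14m} - 1, where C(X) = -1 + X + X² + X⁴, is (the first row of) a circulant weighing matrix CW(14m,16); moreover it is proper, i.e. its support is not contained in any coset of a proper subgroup of ℤ/14mℤ. In particular, a proper CW(14m,16) exists for every m ≥ 2. -/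
def cwu : ZMod 14 → ℤ := fun s =>
  if s = 0 then -1 else if s = 1 then -1 else if s = 2 then 1 else if s = 4 then 1
  else if s = 7 then 1 else if s = 8 then 1 else if s = 9 then -1 else if s = 11 then -1 else 0

def cwv : ZMod 14 → ℤ := fun s =>
  if s = 0 then -1 else if s = 1 then 1 else if s = 2 then 1 else if s = 4 then 1
  else if s = 7 then -1 else if s = 8 then 1 else if s = 9 then 1 else if s = 11 then 1 else 0

def cwphi (m : ℕ) : ZMod 14 → ZMod (14 * m) := fun s => ((s.val * m : ℕ) : ZMod (14 * m))

lemma sum_zmod14 {β : Type*} [AddCommMonoid β] (g : ZMod 14 → β) :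
    ∑ s, g s = g 0 + (g 1 + (g 2 + (g 3 + (g 4 + (g 5 + (g 6 + (g 7 + (g 8 + (g 9 +
      (g 10 + (g 11 + (g 12 + g 13)))))))))))) := by
  rw [show (Finset.univ : Finset (ZMod 14)) = {0,1,2,3,4,5,6,7,8,9,10,11,12,13} from by decide]
  rw [Finset.sum_insert (by decide), Finset.sum_insert (by decide), Finset.sum_insert (by decide),
    Finset.sum_insert (by decide), Finset.sum_insert (by decide), Finset.sum_insert (by decide),
    Finset.sum_insert (by decide), Finset.sum_insert (by decide), Finset.sum_insert (by decide),
    Finset.sum_insert (by decide), Finset.sum_insert (by decide), Finset.sum_insert (by decide),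
    Finset.sum_insert (by decide), Finset.sum_singleton]

lemma cwphi_0 (m : ℕ) : cwphi m 0 = ((0 * m : ℕ) : ZMod (14 * m)) := by
  unfold cwphi; congr 1
lemma cwphi_1 (m : ℕ) : cwphi m 1 = ((1 * m : ℕ) : ZMod (14 * m)) := by
  unfold cwphi; congr 1
lemma cwphi_2 (m : ℕ) : cwphi m 2 = ((2 * m : ℕ) : ZMod (14 * m)) := by
  unfold cwphi; congr 1
lemma cwphi_3 (m : ℕ) : cwphi m 3 = ((3 * m : ℕ) : ZMod (14 * m)) := by
  unfold cwphi; congr 1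
lemma cwphi_4 (m : ℕ) : cwphi m 4 = ((4 * m : ℕ) : ZMod (14 * m)) := by
  unfold cwphi; congr 1
lemma cwphi_5 (m : ℕ) : cwphi m 5 = ((5 * m : ℕ) : ZMod (14 * m)) := by
  unfold cwphi; congr 1
lemma cwphi_6 (m : ℕ) : cwphi m 6 = ((6 * m : ℕ) : ZMod (14 * m)) := by
  unfold cwphi; congr 1
lemma cwphi_7 (m : ℕ) : cwphi m 7 = ((7 * m : ℕ) : ZMod (14 * m)) := by
  unfold cwphi; congr 1
lemma cwphi_8 (m : ℕ) : cwphi m 8 = ((8 * m : ℕ) : ZMod (14 * m)) := by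
  unfold cwphi; congr 1
lemma cwphi_9 (m : ℕ) : cwphi m 9 = ((9 * m : ℕ) : ZMod (14 * m)) := by
  unfold cwphi; congr 1
lemma cwphi_10 (m : ℕ) : cwphi m 10 = ((10 * m : ℕ) : ZMod (14 * m)) := by
  unfold cwphi; congr 1
lemma cwphi_11 (m : ℕ) : cwphi m 11 = ((11 * m : ℕ) : ZMod (14 * m)) := by
  unfold cwphi; congr 1
lemma cwphi_12 (m : ℕ) : cwphi m 12 = ((12 * m : ℕ) : ZMod (14 * m)) := by
  unfold cwphi; congr 1
lemma cwphi_13 (m : ℕ) : cwphi m 13 = ((13 * m : ℕ) : ZMod (14 * m)) := by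
  unfold cwphi; congr 1

lemma cwA_split (m : ℕ) (hm : 2 ≤ m) [NeZero m] (x : ZMod (14 * m)) :
    (∑ j ∈ ({0, 1, 2, 4} : Finset ℕ),
        (if j = 0 then (-1 : ℤ) else 1) *
          ((if x = ((2 * m * j : ℕ) : ZMod (14 * m)) then (1 : ℤ) else 0)
            - (if x = ((7 * m + 2 * m * j : ℕ) : ZMod (14 * m)) then 1 else 0)
            + (if x = ((1 + m * j : ℕ) : ZMod (14 * m)) then 1 else 0)
            + (if x = ((7 * m + 1 + m * j : ℕ) : ZMod (14 * m)) then 1 else 0))) =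
    (∑ s : ZMod 14, cwu s * (if x = cwphi m s then (1:ℤ) else 0)) +
    (∑ s : ZMod 14, cwv s * (if x = 1 + cwphi m s then (1:ℤ) else 0)) := by
  have h15 : ((m : ZMod (14 * m)) * 15) = (m : ZMod (14*m)) := by
    have h0 : ((14 * m : ℕ) : ZMod (14 * m)) = 0 := ZMod.natCast_self _
    push_cast at h0
    linear_combination h0
  rw [Finset.sum_insert (by decide), Finset.sum_insert (by decide), Finset.sum_insert (by decide),
    Finset.sum_singleton]
  rw [sum_zmod14 (fun s => cwu s * (if x = cwphi m s then (1:ℤ) else 0)),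
      sum_zmod14 (fun s => cwv s * (if x = 1 + cwphi m s then (1:ℤ) else 0))]
  simp only [cwphi_0, cwphi_1, cwphi_2, cwphi_3, cwphi_4, cwphi_5, cwphi_6, cwphi_7,
    cwphi_8, cwphi_9, cwphi_10, cwphi_11, cwphi_12, cwphi_13]
  simp only [
    show cwu 0 = (-1) from by decide, show cwu 1 = (-1) from by decide,
    show cwu 2 = (1:ℤ) from by decide, show cwu 3 = (0:ℤ) from by decide,
    show cwu 4 = (1:ℤ) from by decide, show cwu 5 = (0:ℤ) from by decide,
    show cwu 6 = (0:ℤ) from by decide, show cwu 7 = (1:ℤ) from by decide,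
    show cwu 8 = (1:ℤ) from by decide, show cwu 9 = (-1) from by decide,
    show cwu 10 = (0:ℤ) from by decide, show cwu 11 = (-1) from by decide,
    show cwu 12 = (0:ℤ) from by decide, show cwu 13 = (0:ℤ) from by decide,
    show cwv 0 = (-1) from by decide, show cwv 1 = (1:ℤ) from by decide,
    show cwv 2 = (1:ℤ) from by decide, show cwv 3 = (0:ℤ) from by decide,
    show cwv 4 = (1:ℤ) from by decide, show cwv 5 = (0:ℤ) from by decide,
    show cwv 6 = (0:ℤ) from by decide, show cwv 7 = (-1) from by decide,
    show cwv 8 = (1:ℤ) from by decide, show cwv 9 = (1:ℤ) from by decide,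
    show cwv 10 = (0:ℤ) from by decide, show cwv 11 = (1:ℤ) from by decide,
    show cwv 12 = (0:ℤ) from by decide, show cwv 13 = (0:ℤ) from by decide]
  push_cast
  ring_nf
  simp only [h15]
  ring_nf


lemma cwu_range : ∀ s : ZMod 14, cwu s = -1 ∨ cwu s = 0 ∨ cwu s = 1 := by decide
lemma cwv_range : ∀ s : ZMod 14, cwv s = -1 ∨ cwv s = 0 ∨ cwv s = 1 := by decide
lemma cwu_0' : cwu 0 = -1 := by decide
lemma cwv_0' : cwv 0 = -1 := by decide

lemma cwF1 : ∀ d : ZMod 14,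
    (∑ s : ZMod 14, (cwu s * cwu (s + d) + cwv s * cwv (s + d))) = if d = 0 then 16 else 0 := by
  decide
lemma cwF2 : ∀ d : ZMod 14, (∑ s : ZMod 14, cwu s * cwv (s + d)) = 0 := by decide
lemma cwF3 : ∀ d : ZMod 14, (∑ s : ZMod 14, cwv s * cwu (s + d)) = 0 := by decide

lemma cwphi_add (m : ℕ) (s d : ZMod 14) :
    cwphi m (s + d) = cwphi m s + cwphi m d := by
  unfold cwphi
  rw [← Nat.cast_add, ← Nat.add_mul, ZMod.natCast_eq_natCast_iff, ZMod.val_add]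
  exact Nat.ModEq.mul_right' m (Nat.mod_modEq _ 14)

lemma cwphi_zero (m : ℕ) : cwphi m 0 = 0 := by simp [cwphi]

lemma cwphi_inj (m : ℕ) [NeZero m] : Function.Injective (cwphi m) := by
  intro s s' h
  unfold cwphi at h
  rw [ZMod.natCast_eq_natCast_iff, Nat.ModEq,
    Nat.mod_eq_of_lt (Nat.mul_lt_mul_of_lt_of_le (ZMod.val_lt s) le_rfl (NeZero.pos m)),
    Nat.mod_eq_of_lt (Nat.mul_lt_mul_of_lt_of_le (ZMod.val_lt s') le_rfl (NeZero.pos m))] at h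
  exact ZMod.val_injective 14 (Nat.eq_of_mul_eq_mul_right (NeZero.pos m) h)

lemma cwphi_ne (m : ℕ) [NeZero m] (hm : 2 ≤ m) (s s' : ZMod 14) :
    (1 : ZMod (14 * m)) + cwphi m s' ≠ cwphi m s := by
  intro h
  have h2 : cwphi m s' + cwphi m (s - s') = cwphi m s := by
    rw [← cwphi_add]; ring_nf
  have h3 : (1 : ZMod (14 * m)) = cwphi m (s - s') := by
    have h4 := h.trans h2.symm
    exact add_left_cancel (a := cwphi m s') (by linear_combination h4)
  unfold cwphi at h3
  rw [show (1 : ZMod (14 * m)) = ((1 : ℕ) : ZMod (14 * m)) by norm_num] at h3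
  rw [ZMod.natCast_eq_natCast_iff, Nat.ModEq,
    Nat.mod_eq_of_lt (by nlinarith [NeZero.pos m]),
    Nat.mod_eq_of_lt (Nat.mul_lt_mul_of_lt_of_le (ZMod.val_lt _) le_rfl (NeZero.pos m))] at h3
  have h5 := Nat.eq_one_of_mul_eq_one_left h3.symm
  omega

lemma corr_delta (n : ℕ) [NeZero n] (a b t : ZMod n) :
    (∑ x : ZMod n, (if x = a then (1:ℤ) else 0) * (if x + t = b then 1 else 0))
      = if a + t = b then 1 else 0 := by
  rw [Finset.sum_eq_single a]
  · simp
  · intro x _ hx; simp [hx]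
  · simp

lemma corr_general {n : ℕ} [NeZero n] {ι : Type} [Fintype ι] (c d : ι → ℤ)
    (p q : ι → ZMod n) (t : ZMod n) :
    (∑ x : ZMod n, (∑ i, c i * (if x = p i then (1:ℤ) else 0)) *
        (∑ j, d j * (if x + t = q j then 1 else 0)))
    = ∑ i, ∑ j, c i * d j * (if p i + t = q j then 1 else 0) := by
  simp only [Finset.sum_mul_sum]
  rw [Finset.sum_comm]
  refine Finset.sum_congr rfl fun i _ => ?_
  rw [Finset.sum_comm]
  refine Finset.sum_congr rfl fun j _ => ?_
  rw [← corr_delta n (p i) (q j) t, Finset.mul_sum]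
  refine Finset.sum_congr rfl fun x _ => by ring

lemma reindex_shift {F : ZMod 14 → ZMod 14 → ℤ} :
    (∑ i : ZMod 14, ∑ j : ZMod 14, F i j) = ∑ d : ZMod 14, ∑ i : ZMod 14, F i (i + d) := by
  rw [show (∑ i : ZMod 14, ∑ j : ZMod 14, F i j)
      = ∑ i : ZMod 14, ∑ d : ZMod 14, F i (i + d) from
    Finset.sum_congr rfl fun i _ => (Equiv.sum_comp (Equiv.addLeft i) (F i)).symm]
  exact Finset.sum_comm


set_option maxHeartbeats 1000000 in
/-- For every `m ≥ 2`, the coefficient function of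
`A(X) = (1 - X^{7m})·C(X^{2m}) + (1 + X^{7m})·X·C(X^m)` mod `X^{14m} - 1`,
where `C(X) = -1 + X + X² + X⁴`, i.e.
`A(X) = ∑_{j ∈ {0,1,2,4}} ε_j (X^{2mj} - X^{7m+2mj} + X^{1+mj} + X^{7m+1+mj})`
with `ε_0 = -1`, `ε_1 = ε_2 = ε_4 = 1`, is a proper `CW(14m, 16)`:
its values lie in `{-1,0,1}`, its autocorrelation is `16·δ_{t,0}`, and its
support is not contained in any coset of a proper subgroup of `ℤ/14mℤ`. -/
theorem proper_CW_14m_16 (m : ℕ) (hm : 2 ≤ m) [NeZero m] :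
    let A : ZMod (14 * m) → ℤ := fun x =>
      ∑ j ∈ ({0, 1, 2, 4} : Finset ℕ),
        (if j = 0 then (-1 : ℤ) else 1) *
          ((if x = ((2 * m * j : ℕ) : ZMod (14 * m)) then (1 : ℤ) else 0)
            - (if x = ((7 * m + 2 * m * j : ℕ) : ZMod (14 * m)) then 1 else 0)
            + (if x = ((1 + m * j : ℕ) : ZMod (14 * m)) then 1 else 0)
            + (if x = ((7 * m + 1 + m * j : ℕ) : ZMod (14 * m)) then 1 else 0))
    (∀ x : ZMod (14 * m), A x = -1 ∨ A x = 0 ∨ A x = 1) ∧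
    (∀ t : ZMod (14 * m),
      (∑ x : ZMod (14 * m), A x * A (x + t)) = if t = 0 then 16 else 0) ∧
    ¬ ∃ (H : AddSubgroup (ZMod (14 * m))) (g : ZMod (14 * m)),
        H ≠ ⊤ ∧ ∀ x : ZMod (14 * m), A x ≠ 0 → x - g ∈ H := by
  intro A
  have hA : ∀ x, A x =
      (∑ s : ZMod 14, cwu s * (if x = cwphi m s then (1:ℤ) else 0)) +
      (∑ s : ZMod 14, cwv s * (if x = 1 + cwphi m s then (1:ℤ) else 0)) :=
    fun x => cwA_split m hm x
  have hinj := cwphi_inj m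
  have hne := cwphi_ne m hm
  -- evaluation of A on the three kinds of points
  have hAphi : ∀ s, A (cwphi m s) = cwu s := by
    intro s
    rw [hA]
    have hE : (∑ s' : ZMod 14, cwu s' * (if cwphi m s = cwphi m s' then (1:ℤ) else 0)) = cwu s := by
      simp [hinj.eq_iff, mul_ite, Finset.sum_ite_eq]
    have hO : (∑ s' : ZMod 14, cwv s' * (if cwphi m s = 1 + cwphi m s' then (1:ℤ) else 0)) = 0 :=
      Finset.sum_eq_zero fun s' _ => by rw [if_neg fun hh => hne s s' hh.symm, mul_zero]
    rw [hE, hO, add_zero]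
  have hAphi' : ∀ s, A (1 + cwphi m s) = cwv s := by
    intro s
    rw [hA]
    have hE : (∑ s' : ZMod 14, cwu s' * (if 1 + cwphi m s = cwphi m s' then (1:ℤ) else 0)) = 0 :=
      Finset.sum_eq_zero fun s' _ => by rw [if_neg (hne s' s), mul_zero]
    have hO : (∑ s' : ZMod 14, cwv s' * (if 1 + cwphi m s = 1 + cwphi m s' then (1:ℤ) else 0)) = cwv s := by
      simp [hinj.eq_iff, mul_ite, Finset.sum_ite_eq]
    rw [hE, hO, zero_add]
  have hA0 : ∀ x : ZMod (14 * m), (¬ ∃ s, x = cwphi m s) → (¬ ∃ s, x = 1 + cwphi m s) →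
      A x = 0 := by
    intro x h1 h2
    rw [hA]
    rw [Finset.sum_eq_zero fun s _ => by rw [if_neg fun hh => h1 ⟨s, hh⟩, mul_zero],
        Finset.sum_eq_zero fun s _ => by rw [if_neg fun hh => h2 ⟨s, hh⟩, mul_zero], add_zero]
  refine ⟨?_, ?_, ?_⟩
  · -- values in {-1,0,1}
    intro x
    by_cases h1 : ∃ s, x = cwphi m s
    · obtain ⟨s, rfl⟩ := h1
      rw [hAphi s]; exact cwu_range s
    · by_cases h2 : ∃ s, x = 1 + cwphi m s
      · obtain ⟨s, rfl⟩ := h2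
        rw [hAphi' s]; exact cwv_range s
      · rw [hA0 x h1 h2]; right; left; rfl
  · -- autocorrelation
    intro t
    have k1 : ∀ i d : ZMod 14,
        (cwphi m i + t = cwphi m (i + d)) = (t = cwphi m d) := fun i d => by
      rw [cwphi_add]
      exact propext ⟨fun h => by linear_combination h, fun h => by linear_combination h⟩
    have k2 : ∀ i d : ZMod 14,
        (cwphi m i + t = 1 + cwphi m (i + d)) = (t = 1 + cwphi m d) := fun i d => by
      rw [cwphi_add]
      exact propext ⟨fun h => by linear_combination h, fun h => by linear_combination h⟩
    have k3 : ∀ i d : ZMod 14,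
        (1 + cwphi m i + t = cwphi m (i + d)) = (t = cwphi m d - 1) := fun i d => by
      rw [cwphi_add]
      exact propext ⟨fun h => by linear_combination h, fun h => by linear_combination h⟩
    have k4 : ∀ i d : ZMod 14,
        (1 + cwphi m i + t = 1 + cwphi m (i + d)) = (t = cwphi m d) := fun i d => by
      rw [cwphi_add]
      exact propext ⟨fun h => by linear_combination h, fun h => by linear_combination h⟩
    have e1 : (∑ i : ZMod 14, ∑ j : ZMod 14, cwu i * cwu j *
          (if cwphi m i + t = cwphi m j then (1:ℤ) else 0))
        = ∑ d : ZMod 14, (∑ i : ZMod 14, cwu i * cwu (i + d)) *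
            (if t = cwphi m d then (1:ℤ) else 0) := by
      rw [reindex_shift]
      refine Finset.sum_congr rfl fun d _ => ?_
      rw [Finset.sum_mul]
      exact Finset.sum_congr rfl fun i _ => by simp only [k1 i d]
    have e2 : (∑ i : ZMod 14, ∑ j : ZMod 14, cwu i * cwv j *
          (if cwphi m i + t = 1 + cwphi m j then (1:ℤ) else 0))
        = ∑ d : ZMod 14, (∑ i : ZMod 14, cwu i * cwv (i + d)) *
            (if t = 1 + cwphi m d then (1:ℤ) else 0) := by
      rw [reindex_shift]
      refine Finset.sum_congr rfl fun d _ => ?_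
      rw [Finset.sum_mul]
      exact Finset.sum_congr rfl fun i _ => by simp only [k2 i d]
    have e3 : (∑ i : ZMod 14, ∑ j : ZMod 14, cwv i * cwu j *
          (if 1 + cwphi m i + t = cwphi m j then (1:ℤ) else 0))
        = ∑ d : ZMod 14, (∑ i : ZMod 14, cwv i * cwu (i + d)) *
            (if t = cwphi m d - 1 then (1:ℤ) else 0) := by
      rw [reindex_shift]
      refine Finset.sum_congr rfl fun d _ => ?_
      rw [Finset.sum_mul]
      exact Finset.sum_congr rfl fun i _ => by simp only [k3 i d]
    have e4 : (∑ i : ZMod 14, ∑ j : ZMod 14, cwv i * cwv j *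
          (if 1 + cwphi m i + t = 1 + cwphi m j then (1:ℤ) else 0))
        = ∑ d : ZMod 14, (∑ i : ZMod 14, cwv i * cwv (i + d)) *
            (if t = cwphi m d then (1:ℤ) else 0) := by
      rw [reindex_shift]
      refine Finset.sum_congr rfl fun d _ => ?_
      rw [Finset.sum_mul]
      exact Finset.sum_congr rfl fun i _ => by simp only [k4 i d]
    have t2z : (∑ d : ZMod 14, (∑ i : ZMod 14, cwu i * cwv (i + d)) *
        (if t = 1 + cwphi m d then (1:ℤ) else 0)) = 0 :=
      Finset.sum_eq_zero fun d _ => by rw [cwF2 d, zero_mul]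
    have t3z : (∑ d : ZMod 14, (∑ i : ZMod 14, cwv i * cwu (i + d)) *
        (if t = cwphi m d - 1 then (1:ℤ) else 0)) = 0 :=
      Finset.sum_eq_zero fun d _ => by rw [cwF3 d, zero_mul]
    have t14 : (∑ d : ZMod 14, (∑ i : ZMod 14, cwu i * cwu (i + d)) *
          (if t = cwphi m d then (1:ℤ) else 0))
        + (∑ d : ZMod 14, (∑ i : ZMod 14, cwv i * cwv (i + d)) *
          (if t = cwphi m d then (1:ℤ) else 0))
        = if t = 0 then 16 else 0 := by
      rw [← Finset.sum_add_distrib]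
      rw [Finset.sum_congr rfl (fun d _ => by
        rw [← add_mul, ← Finset.sum_add_distrib, cwF1 d] :
          ∀ d ∈ Finset.univ, (∑ i : ZMod 14, cwu i * cwu (i + d)) *
              (if t = cwphi m d then (1:ℤ) else 0)
            + (∑ i : ZMod 14, cwv i * cwv (i + d)) * (if t = cwphi m d then (1:ℤ) else 0)
            = (if d = 0 then (16:ℤ) else 0) * (if t = cwphi m d then (1:ℤ) else 0))]
      rw [Finset.sum_eq_single 0]
      · rw [if_pos rfl, cwphi_zero]
        split_ifs <;> ring
      · intro d _ hd; rw [if_neg hd, zero_mul]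
      · intro h; exact absurd (Finset.mem_univ 0) h
    calc (∑ x : ZMod (14*m), A x * A (x + t))
        = ∑ x : ZMod (14*m),
            ((∑ s : ZMod 14, cwu s * (if x = cwphi m s then (1:ℤ) else 0)) +
             (∑ s : ZMod 14, cwv s * (if x = 1 + cwphi m s then (1:ℤ) else 0))) *
            ((∑ s : ZMod 14, cwu s * (if x + t = cwphi m s then (1:ℤ) else 0)) +
             (∑ s : ZMod 14, cwv s * (if x + t = 1 + cwphi m s then (1:ℤ) else 0))) :=
          Finset.sum_congr rfl fun x _ => by rw [hA x, hA (x + t)]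
      _ = (∑ x : ZMod (14*m),
            (∑ s : ZMod 14, cwu s * (if x = cwphi m s then (1:ℤ) else 0)) *
            (∑ s : ZMod 14, cwu s * (if x + t = cwphi m s then (1:ℤ) else 0)))
          + ((∑ x : ZMod (14*m),
            (∑ s : ZMod 14, cwu s * (if x = cwphi m s then (1:ℤ) else 0)) *
            (∑ s : ZMod 14, cwv s * (if x + t = 1 + cwphi m s then (1:ℤ) else 0)))
          + ((∑ x : ZMod (14*m),
            (∑ s : ZMod 14, cwv s * (if x = 1 + cwphi m s then (1:ℤ) else 0)) *
            (∑ s : ZMod 14, cwu s * (if x + t = cwphi m s then (1:ℤ) else 0)))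
          + (∑ x : ZMod (14*m),
            (∑ s : ZMod 14, cwv s * (if x = 1 + cwphi m s then (1:ℤ) else 0)) *
            (∑ s : ZMod 14, cwv s * (if x + t = 1 + cwphi m s then (1:ℤ) else 0))))) := by
          rw [← Finset.sum_add_distrib, ← Finset.sum_add_distrib, ← Finset.sum_add_distrib]
          exact Finset.sum_congr rfl fun x _ => by ring
      _ = if t = 0 then 16 else 0 := by
          rw [corr_general cwu cwu (cwphi m) (cwphi m) t,
              corr_general cwu cwv (cwphi m) (fun s => 1 + cwphi m s) t,
              corr_general cwv cwu (fun s => 1 + cwphi m s) (cwphi m) t,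
              corr_general cwv cwv (fun s => 1 + cwphi m s) (fun s => 1 + cwphi m s) t]
          rw [e1, e2, e3, e4, t2z, t3z]
          rw [← t14]; ring
  · -- properness
    rintro ⟨H, g, hH, hsupp⟩
    have hs0 : A 0 ≠ 0 := by
      rw [show (0 : ZMod (14 * m)) = cwphi m 0 from (cwphi_zero m).symm, hAphi 0, cwu_0']
      norm_num
    have hs1 : A 1 ≠ 0 := by
      rw [show (1 : ZMod (14 * m)) = 1 + cwphi m 0 from by rw [cwphi_zero, add_zero],
        hAphi' 0, cwv_0']
      norm_num
    have h1H : (1 : ZMod (14 * m)) ∈ H := by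
      have := H.sub_mem (hsupp 1 hs1) (hsupp 0 hs0)
      simpa using this
    apply hH
    rw [eq_top_iff]
    intro x _
    have hx := AddSubgroup.nsmul_mem H h1H x.val
    rwa [nsmul_eq_mul, mul_one, ZMod.natCast_rightInverse x] at hx
end
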